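/- For every integer n ≥ 1, every p ∈ I_n, and every integer j ≥ 0, the widths and heights satisfy the self-similarity relations w_{p,j+n} = w_{p,n} · w_{p,j} and h_{p,j+n} = w_{p,n} · h_{p,j}. -/

import Mathlib

open Matrix

noncomputable section

/-- `M1 = [[1,1,0],[0,1,0],[0,0,1]]`. -/
def M1 : Matrix (Fin 3) (Fin 3) ℝ := !![1, 1, 0; 0, 1, 0; 0, 0, 1]

/-- `M2 = [[1,0,0],[1,1,1],[0,0,1]]`. -/
def M2 : Matrix (Fin 3) (Fin 3) ℝ := !![1, 0, 0; 1, 1, 1; 0, 0, 1]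

/-- `M3 = [[1,0,0],[0,1,0],[0,1,1]]`. -/
def M3 : Matrix (Fin 3) (Fin 3) ℝ := !![1, 0, 0; 0, 1, 0; 0, 1, 1]

/- A tuple `p = (p_n, p_n', q_n, …, p_1, p_1', q_1) ∈ ℕ₀^{3n}` is encoded by three
functions `P P' Q : Fin n → ℕ`, where the index `i : Fin n` corresponds to the
subscript `i + 1` (so `P ⟨0,_⟩ = p_1`, …, `P ⟨n-1,_⟩ = p_n`). -/

/-- The transition matrix `M_p = M1^{p_n} M3^{p_n'} M2^{q_n} ⋯ M1^{p_1} M3^{p_1'} M2^{q_1}`. -/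
def Mp (n : ℕ) (P P' Q : Fin n → ℕ) : Matrix (Fin 3) (Fin 3) ℝ :=
  ((List.finRange n).map fun i => M1 ^ P i.rev * M3 ^ P' i.rev * M2 ^ Q i.rev).prod

/-- Membership of the tuple `p` in `I_n`. -/
def memI (n : ℕ) (P P' Q : Fin n → ℕ) : Prop :=
  (∀ i, 0 < Q i) ∧ (∀ i, 0 < P i + P' i) ∧ (∃ j, 0 < P j) ∧ (∃ k, 0 < P' k)

/-- Finite continued fraction: `cf [a₁, …, a_m] x = 1/(a₁ + 1/(a₂ + ⋯ + 1/(a_m + x)))`. -/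
def cf (l : List ℕ) (x : ℝ) : ℝ := l.foldr (fun a y => 1 / (a + y)) x

/-- The (0-indexed) block index `k(j+1) - 1 = n - 1 - (j mod n)` used at step `j + 1`. -/
def blk (n : ℕ) (hn : 0 < n) (j : ℕ) : Fin n :=
  ⟨n - 1 - j % n, lt_of_le_of_lt (Nat.sub_le _ _) (Nat.sub_lt hn one_pos)⟩

/-- The sequence `(a₁, …, a_{2n}) = (p_n + p_n', q_n, …, p_1 + p_1', q_1)` as a list. -/
def aList (n : ℕ) (hn : 0 < n) (P P' Q : Fin n → ℕ) : List ℕ :=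
  (List.range n).flatMap fun i => [P (blk n hn i) + P' (blk n hn i), Q (blk n hn i)]

/-- `isH0 n hn P P' Q h0` says that `h0` is the number `h_{p,0}`: a real number in `(0,1)`
that is a fixed point of `x ↦ 1/(a₁ + 1/(a₂ + ⋯ + 1/(a_{2n} + x)))` (there is exactly one). -/
def isH0 (n : ℕ) (hn : 0 < n) (P P' Q : Fin n → ℕ) (h0 : ℝ) : Prop :=
  h0 ∈ Set.Ioo (0 : ℝ) 1 ∧ cf (aList n hn P P' Q) h0 = h0

/-- The pair `(w_{p,j}, h_{p,j})`, with `w_{p,0} = 1`, `h_{p,0} = h0`, and for `j ≥ 1`: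
`w_{p,j} = w_{p,j-1} − (p_{k(j)} + p'_{k(j)}) h_{p,j-1}`, `h_{p,j} = h_{p,j-1} − q_{k(j)} w_{p,j}`. -/
def wh (n : ℕ) (hn : 0 < n) (P P' Q : Fin n → ℕ) (h0 : ℝ) : ℕ → ℝ × ℝ
  | 0 => (1, h0)
  | j + 1 =>
    let prev := wh n hn P P' Q h0 j
    let b := blk n hn j
    let w := prev.1 - ((P b : ℝ) + (P' b : ℝ)) * prev.2
    (w, prev.2 - (Q b : ℝ) * w)

/-- The width `w_{p,j}`. -/
def wseq (n : ℕ) (hn : 0 < n) (P P' Q : Fin n → ℕ) (h0 : ℝ) (j : ℕ) : ℝ :=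
  (wh n hn P P' Q h0 j).1

/-- The height `h_{p,j}`. -/
def hseq (n : ℕ) (hn : 0 < n) (P P' Q : Fin n → ℕ) (h0 : ℝ) (j : ℕ) : ℝ :=
  (wh n hn P P' Q h0 j).2

/-- The split ratio `s_p = Σ_{i=0}^∞ p_{k(i+1)} h_{p,i}`. -/
def splitRatio (n : ℕ) (hn : 0 < n) (P P' Q : Fin n → ℕ) (h0 : ℝ) : ℝ :=
  ∑' i : ℕ, (P (blk n hn i) : ℝ) * hseq n hn P P' Q h0 i

/-- The reindexing realizing the shift `T`: the tuple `T(p)` is given by the functions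
`P ∘ shiftIdx n hn`, `P' ∘ shiftIdx n hn`, `Q ∘ shiftIdx n hn`. -/
def shiftIdx (n : ℕ) (hn : 0 < n) (i : Fin n) : Fin n :=
  ⟨(i.val + (n - 1)) % n, Nat.mod_lt _ hn⟩

/-! The recursion for `(w_{p,j}, h_{p,j})` is linear and `n`-periodic in `j`, so everything
reduces to the single identity `h_{p,n} = w_{p,n} · h_{p,0}`. That identity comes from the
continued-fraction expansion: by induction on `j ≤ n`, `h_{p,j} = c_j · w_{p,j}` where `c_j` is the
continued fraction of `a_{2j+1}, …, a_{2n}` evaluated at `h_{p,0}`; `c_0 = h_{p,0}` is the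
fixed-point equation and `c_n = h_{p,0}` is the claim. -/

lemma cf_append (l₁ l₂ : List ℕ) (x : ℝ) : cf (l₁ ++ l₂) x = cf l₁ (cf l₂ x) := by
  induction l₁ with
  | nil => rfl
  | cons a l ih => exact congrArg (fun y => 1 / ((a : ℝ) + y)) ih

lemma cf_pos {x : ℝ} (hx : 0 < x) (l : List ℕ) : 0 < cf l x := by
  induction l with
  | nil => exact hx
  | cons a l ih => exact one_div_pos.mpr (by positivity)

lemma cf_pair (a b : ℕ) (x : ℝ) : cf [a, b] x = 1 / (a + 1 / (b + x)) := rfl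

def whStep (a b : ℝ) (v : ℝ × ℝ) : ℝ × ℝ :=
  (v.1 - a * v.2, v.2 - b * (v.1 - a * v.2))

lemma whStep_smul (a b c : ℝ) (v : ℝ × ℝ) : whStep a b (c • v) = c • whStep a b v := by
  ext <;> simp only [whStep, Prod.smul_fst, Prod.smul_snd, smul_eq_mul] <;> ring

lemma whStep_snd_eq_mul_fst {a b x : ℝ} (ha : 0 ≤ a) (hb : 0 ≤ b) (hx : 0 < x) {v : ℝ × ℝ}
    (hv : v.2 = 1 / (a + 1 / (b + x)) * v.1) :
    (whStep a b v).2 = x * (whStep a b v).1 := by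
  have hbx : 0 < b + x := by linarith
  have habx : 0 < a + 1 / (b + x) := by positivity
  obtain ⟨w, h⟩ := v
  simp only [whStep] at hv ⊢
  subst hv
  field_simp
  ring

section Sequences

variable {n : ℕ} (hn : 0 < n) (P P' Q : Fin n → ℕ) (h0 : ℝ)

lemma wh_succ (j : ℕ) :
    wh n hn P P' Q h0 (j + 1) =
      whStep (P (blk n hn j) + P' (blk n hn j)) (Q (blk n hn j)) (wh n hn P P' Q h0 j) :=
  rfl

lemma blk_add_self (j : ℕ) : blk n hn (j + n) = blk n hn j := by
  simp [blk]

/-- `(a_{2j+1}, a_{2j+2})`, the entries used by the step from `j` to `j + 1`. -/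
def blkEntries (j : ℕ) : List ℕ := [P (blk n hn j) + P' (blk n hn j), Q (blk n hn j)]

lemma flatMap_range'_eq_append {j : ℕ} (hj : j < n) :
    (List.range' j (n - j)).flatMap (blkEntries hn P P' Q) =
      blkEntries hn P P' Q j ++
        (List.range' (j + 1) (n - (j + 1))).flatMap (blkEntries hn P P' Q) := by
  rw [show n - j = n - (j + 1) + 1 by omega, List.range'_succ, List.flatMap_cons]

lemma hseq_eq_cf_mul_wseq (hh0 : isH0 n hn P P' Q h0) {j : ℕ} (hj : j ≤ n) :
    hseq n hn P P' Q h0 j =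
      cf ((List.range' j (n - j)).flatMap (blkEntries hn P P' Q)) h0 * wseq n hn P P' Q h0 j := by
  induction j with
  | zero =>
    rw [Nat.sub_zero, ← List.range_eq_range']
    exact hh0.2.symm.trans (mul_one _).symm
  | succ j ih =>
    have ih := ih (by omega)
    rw [flatMap_range'_eq_append hn P P' Q (by omega), cf_append, blkEntries, cf_pair] at ih
    simp only [hseq, wseq, wh_succ] at ih ⊢
    push_cast at ih
    exact whStep_snd_eq_mul_fst (by positivity) (by positivity) (cf_pos hh0.1.1 _) ih

lemma wh_self (hh0 : isH0 n hn P P' Q h0) :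
    wh n hn P P' Q h0 n = wseq n hn P P' Q h0 n • wh n hn P P' Q h0 0 := by
  have h := hseq_eq_cf_mul_wseq hn P P' Q h0 hh0 le_rfl
  rw [Nat.sub_self, List.range'_zero, List.flatMap_nil, cf] at h
  ext
  · simp [wseq, wh]
  · simpa [hseq, wseq, wh, mul_comm] using h

lemma wh_add_self (hh0 : isH0 n hn P P' Q h0) (j : ℕ) :
    wh n hn P P' Q h0 (j + n) = wseq n hn P P' Q h0 n • wh n hn P P' Q h0 j := by
  induction j with
  | zero => rw [Nat.zero_add, wh_self hn P P' Q h0 hh0]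
  | succ j ih => rw [Nat.add_right_comm, wh_succ, wh_succ, blk_add_self, ih, whStep_smul]

end Sequences

theorem stmt5_general (n : ℕ) (hn : 0 < n) (P P' Q : Fin n → ℕ)
    (h0 : ℝ) (hh0 : isH0 n hn P P' Q h0) :
    ∀ j : ℕ,
      wseq n hn P P' Q h0 (j + n) = wseq n hn P P' Q h0 n * wseq n hn P P' Q h0 j ∧
      hseq n hn P P' Q h0 (j + n) = wseq n hn P P' Q h0 n * hseq n hn P P' Q h0 j := fun j =>
  Prod.ext_iff.mp (wh_add_self hn P P' Q h0 hh0 j)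

/-- self-similarity: `w_{p,j+n} = w_{p,n} · w_{p,j}` and
`h_{p,j+n} = w_{p,n} · h_{p,j}` for all `j ≥ 0`. -/
theorem stmt5 (n : ℕ) (hn : 0 < n) (P P' Q : Fin n → ℕ) (hI : memI n P P' Q)
    (h0 : ℝ) (hh0 : isH0 n hn P P' Q h0) :
    ∀ j : ℕ,
      wseq n hn P P' Q h0 (j + n) = wseq n hn P P' Q h0 n * wseq n hn P P' Q h0 j ∧
      hseq n hn P P' Q h0 (j + n) = wseq n hn P P' Q h0 n * hseq n hn P P' Q h0 j :=
  stmt5_general n hn P P' Q h0 hh0
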